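/- arXiv:2010.11707 — 2 statements merged into one kernel-verified Lean document; each statement's English description precedes it below -/
import Mathlib

section
/- The maximally coherent state attains the maximal coherence: for |φ⟩ = (1/√d) ∑_j e^{iφ_j}|j⟩ and ρ_d = |φ⟩⟨φ|, one has C_q(ρ_d) = (d^{(q-1)/q} − 1)/(q−1) for q ∈ (0,1). -/
open Matrix
open scoped ComplexOrder

/-- Real power of a Hermitian matrix via its spectral decomposition
(defined to be `0` on non-Hermitian matrices). -/
noncomputable def mpow {d : ℕ} (A : Matrix (Fin d) (Fin d) ℂ) (r : ℝ) :
    Matrix (Fin d) (Fin d) ℂ :=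
  if hA : A.IsHermitian then
    (hA.eigenvectorUnitary : Matrix (Fin d) (Fin d) ℂ) *
      Matrix.diagonal (fun i => ((hA.eigenvalues i ^ r : ℝ) : ℂ)) *
      star (hA.eigenvectorUnitary : Matrix (Fin d) (Fin d) ℂ)
  else 0

/-- The Tsallis relative operator entropy
`T_q(ρ‖σ) = (ρ^{1/2} (ρ^{-1/2} σ ρ^{-1/2})^{1-q} ρ^{1/2} - ρ)/(1-q)`. -/
noncomputable def Tq {d : ℕ} (ρ σ : Matrix (Fin d) (Fin d) ℂ) (q : ℝ) :
    Matrix (Fin d) (Fin d) ℂ :=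
  (((1 - q : ℝ) : ℂ))⁻¹ •
    (mpow ρ (1/2) * mpow (mpow ρ (-(1/2)) * σ * mpow ρ (-(1/2))) (1 - q) * mpow ρ (1/2) - ρ)


/-- `f_q(ρ,σ) = Tr[ρ^{1/2} (ρ^{-1/2} σ ρ^{-1/2})^{1-q} ρ^{1/2}]` (as a real number). -/
noncomputable def fq {d : ℕ} (ρ σ : Matrix (Fin d) (Fin d) ℂ) (q : ℝ) : ℝ :=
  (mpow ρ (1/2) * mpow (mpow ρ (-(1/2)) * σ * mpow ρ (-(1/2))) (1 - q) * mpow ρ (1/2)).trace.re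

/-! The state `ρ_d = |ψ⟩⟨ψ|` is a rank-one projection, so `ρ σ ρ = ⟨ψ|σ|ψ⟩ ρ`, and on the
spectrum `{0, 1}` of a projection `P` the power `(t x)^r` agrees with `t^r x`, whence
`(t P)^r = t^r P` for `r ≠ 0`. Therefore `f_q(ρ, σ) = ⟨ψ|σ|ψ⟩^{1-q}`. As every `|ψ_j|²` equals
`1/d`, `⟨ψ|σ|ψ⟩ = 1/d` for every diagonal state `σ`: the function being minimised is constant. -/

lemma mpow_eq_cfc {d : ℕ} {A : Matrix (Fin d) (Fin d) ℂ} (hA : A.IsHermitian) (r : ℝ) :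
    mpow A r = cfc (· ^ r : ℝ → ℝ) A := by
  rw [mpow, dif_pos hA, hA.cfc_eq, IsHermitian.cfc, Unitary.conjStarAlgAut_apply]
  rfl

lemma mpow_smul_of_isIdempotentElem {d : ℕ} {P : Matrix (Fin d) (Fin d) ℂ}
    (hP : IsSelfAdjoint P) (hPP : IsIdempotentElem P) (t : ℝ) {r : ℝ} (hr : r ≠ 0) :
    mpow (t • P) r = t ^ r • P := by
  have hspec : spectrum ℝ P ⊆ {0, 1} := hPP.spectrum_subset ℝ
  have hfin : ((t • ·) '' spectrum ℝ P).Finite := ((Set.toFinite _).subset hspec).image _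
  rw [mpow_eq_cfc ((IsSelfAdjoint.all t).smul hP), ← cfc_comp_smul t _ P (hfin.continuousOn _),
    ← cfc_const_mul_id (t ^ r) P]
  refine cfc_congr fun x hx => ?_
  rcases hspec hx with rfl | rfl
  · simp [Real.zero_rpow hr]
  · simp

lemma mpow_of_isIdempotentElem {d : ℕ} {P : Matrix (Fin d) (Fin d) ℂ}
    (hP : IsSelfAdjoint P) (hPP : IsIdempotentElem P) {r : ℝ} (hr : r ≠ 0) : mpow P r = P := by
  simpa using mpow_smul_of_isIdempotentElem hP hPP 1 hr

section PureState

variable {n R : Type*} [CommSemiring R] [StarRing R]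

lemma isSelfAdjoint_vecMulVec_star (ψ : n → R) : IsSelfAdjoint (vecMulVec ψ (star ψ)) := by
  rw [IsSelfAdjoint, star_eq_conjTranspose, conjTranspose_vecMulVec, star_star]

variable [Fintype n] {ψ : n → R}

lemma isIdempotentElem_vecMulVec_star (hψ : star ψ ⬝ᵥ ψ = 1) :
    IsIdempotentElem (vecMulVec ψ (star ψ)) := by
  rw [IsIdempotentElem, vecMulVec_mul_vecMulVec, hψ, one_smul]

lemma vecMulVec_star_mul_mul_vecMulVec_star (σ : Matrix n n R) :
    vecMulVec ψ (star ψ) * σ * vecMulVec ψ (star ψ) =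
      (star ψ ⬝ᵥ σ *ᵥ ψ) • vecMulVec ψ (star ψ) := by
  rw [vecMulVec_mul, vecMulVec_mul_vecMulVec, vecMulVec_smul, dotProduct_mulVec]

lemma trace_vecMulVec_star (hψ : star ψ ⬝ᵥ ψ = 1) : (vecMulVec ψ (star ψ)).trace = 1 := by
  rw [trace_vecMulVec, dotProduct_comm, hψ]

end PureState

lemma fq_vecMulVec_star {d : ℕ} {ψ : Fin d → ℂ} (hψ : star ψ ⬝ᵥ ψ = 1)
    {σ : Matrix (Fin d) (Fin d) ℂ} {t : ℝ} (hσ : star ψ ⬝ᵥ σ *ᵥ ψ = t) {q : ℝ} (hq : q ≠ 1) :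
    fq (vecMulVec ψ (star ψ)) σ q = t ^ (1 - q) := by
  have hsa := isSelfAdjoint_vecMulVec_star ψ
  have hidem := isIdempotentElem_vecMulVec_star hψ
  rw [fq, mpow_of_isIdempotentElem hsa hidem (by norm_num),
    mpow_of_isIdempotentElem hsa hidem (by norm_num), vecMulVec_star_mul_mul_vecMulVec_star σ, hσ,
    Complex.coe_smul, mpow_smul_of_isIdempotentElem hsa hidem t (sub_ne_zero.mpr hq.symm),
    mul_smul_comm, smul_mul_assoc, hidem.eq, hidem.eq, trace_smul, trace_vecMulVec_star hψ]
  simp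

section MaximallyCoherent

variable {d : ℕ}

noncomputable def maximallyCoherentVector (φ : Fin d → ℝ) : Fin d → ℂ :=
  fun j => ((√d : ℝ) : ℂ)⁻¹ * Complex.exp (Complex.I * φ j)

lemma star_maximallyCoherentVector (φ : Fin d → ℝ) (j : Fin d) :
    star (maximallyCoherentVector φ j) =
      ((√d : ℝ) : ℂ)⁻¹ * Complex.exp (-(Complex.I * φ j)) := by
  simp [maximallyCoherentVector, ← Complex.exp_conj]

lemma vecMulVec_maximallyCoherentVector (φ : Fin d → ℝ) :
    vecMulVec (maximallyCoherentVector φ) (star (maximallyCoherentVector φ)) =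
      Matrix.of fun i j =>
        (d : ℂ)⁻¹ * Complex.exp (Complex.I * φ i) * Complex.exp (-(Complex.I * φ j)) := by
  ext i j
  have hsqrt : ((√d : ℝ) : ℂ) * ((√d : ℝ) : ℂ) = d := by
    rw [← Complex.ofReal_mul, Real.mul_self_sqrt (Nat.cast_nonneg d), Complex.ofReal_natCast]
  rw [vecMulVec_apply, Pi.star_apply, star_maximallyCoherentVector, maximallyCoherentVector,
    of_apply, ← hsqrt, mul_inv]
  ring

lemma star_mul_maximallyCoherentVector (φ : Fin d → ℝ) (j : Fin d) :
    star (maximallyCoherentVector φ j) * maximallyCoherentVector φ j = (d : ℂ)⁻¹ := by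
  rw [star_maximallyCoherentVector, maximallyCoherentVector, mul_mul_mul_comm, ← Complex.exp_add,
    neg_add_cancel, Complex.exp_zero, mul_one, ← mul_inv, ← Complex.ofReal_mul,
    Real.mul_self_sqrt (Nat.cast_nonneg d), Complex.ofReal_natCast]

lemma star_maximallyCoherentVector_dotProduct_diagonal_mulVec (φ p : Fin d → ℝ) :
    star (maximallyCoherentVector φ) ⬝ᵥ
        diagonal (fun i => (p i : ℂ)) *ᵥ maximallyCoherentVector φ =
      ((d : ℝ)⁻¹ * ∑ i, p i : ℝ) := by
  simp only [dotProduct, mulVec_diagonal, Pi.star_apply, mul_left_comm (star _),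
    star_mul_maximallyCoherentVector, ← Finset.sum_mul]
  push_cast
  ring

lemma star_maximallyCoherentVector_dotProduct_self (hd : 0 < d) (φ : Fin d → ℝ) :
    star (maximallyCoherentVector φ) ⬝ᵥ maximallyCoherentVector φ = 1 := by
  simpa [hd.ne'] using star_maximallyCoherentVector_dotProduct_diagonal_mulVec φ 1

end MaximallyCoherent

theorem maximally_coherent_state_coherence_general {d : ℕ} (hd : 0 < d) (φ : Fin d → ℝ)
    (q : ℝ) (hq1 : q < 1) :
    IsLeast {c : ℝ | ∃ p : Fin d → ℝ, (∀ i, 0 ≤ p i) ∧ ∑ i, p i = 1 ∧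
        c = ((fq (Matrix.of fun i j =>
              (d : ℂ)⁻¹ * Complex.exp (Complex.I * φ i) * Complex.exp (-(Complex.I * φ j)))
            (Matrix.diagonal (fun i => (p i : ℂ))) q) ^ (1 / q) - 1) / (q - 1)}
      (((d : ℝ) ^ ((q - 1) / q) - 1) / (q - 1)) := by
  have hd0 : (0 : ℝ) ≤ d := Nat.cast_nonneg d
  have hconst : ∀ p : Fin d → ℝ, ∑ i, p i = 1 →
      (fq (Matrix.of fun i j =>
          (d : ℂ)⁻¹ * Complex.exp (Complex.I * φ i) * Complex.exp (-(Complex.I * φ j)))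
        (Matrix.diagonal (fun i => (p i : ℂ))) q) ^ (1 / q) = (d : ℝ) ^ ((q - 1) / q) := by
    intro p hp
    rw [← vecMulVec_maximallyCoherentVector, fq_vecMulVec_star
      (star_maximallyCoherentVector_dotProduct_self hd φ)
      (star_maximallyCoherentVector_dotProduct_diagonal_mulVec φ p) hq1.ne, hp, mul_one,
      Real.inv_rpow hd0, ← Real.rpow_neg hd0, ← Real.rpow_mul hd0]
    ring_nf
  have huniform : ∑ _i : Fin d, (d : ℝ)⁻¹ = 1 := by
    rw [Finset.sum_const, Finset.card_univ, Fintype.card_fin, nsmul_eq_mul,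
      mul_inv_cancel₀ (Nat.cast_ne_zero.mpr hd.ne')]
  refine ⟨⟨fun _ => (d : ℝ)⁻¹, fun _ => by positivity, huniform, ?_⟩, ?_⟩
  · rw [hconst _ huniform]
  · rintro c ⟨p, -, hp, rfl⟩
    rw [hconst p hp]

theorem maximally_coherent_state_coherence {d : ℕ} (hd : 0 < d) (φ : Fin d → ℝ)
    (q : ℝ) (hq0 : 0 < q) (hq1 : q < 1) :
    IsLeast {c : ℝ | ∃ p : Fin d → ℝ, (∀ i, 0 ≤ p i) ∧ ∑ i, p i = 1 ∧
        c = ((fq (Matrix.of fun i j =>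
              (d : ℂ)⁻¹ * Complex.exp (Complex.I * φ i) * Complex.exp (-(Complex.I * φ j)))
            (Matrix.diagonal (fun i => (p i : ℂ))) q) ^ (1 / q) - 1) / (q - 1)}
      (((d : ℝ) ^ ((q - 1) / q) - 1) / (q - 1)) :=
  maximally_coherent_state_coherence_general hd φ q hq1
end

section
/- For any density matrices ρ, σ (with ρ invertible), (Tr[ρ^{1/2}(ρ^{-1/2}σρ^{-1/2})^{1/2}ρ^{1/2}])² ≤ (Tr[(ρ^{1/2}σρ^{1/2})^{1/2}])², i.e., f_{1/2}(ρ,σ)² ≤ F(ρ,σ), the Uhlmann fidelity. -/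
open Matrix
open scoped ComplexOrder

variable {d : ℕ}

lemma mpow_eq {A : Matrix (Fin d) (Fin d) ℂ} (hA : A.IsHermitian) (r : ℝ) :
    mpow A r = (hA.eigenvectorUnitary : Matrix (Fin d) (Fin d) ℂ) *
      Matrix.diagonal (fun i => ((hA.eigenvalues i ^ r : ℝ) : ℂ)) *
      star (hA.eigenvectorUnitary : Matrix (Fin d) (Fin d) ℂ) := dif_pos hA

lemma mpow_posSemidef {A : Matrix (Fin d) (Fin d) ℂ} (hA : A.PosSemidef) (r : ℝ) :
    (mpow A r).PosSemidef := by
  rw [mpow_eq hA.1 r]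
  have := (Matrix.posSemidef_diagonal_iff (d := fun i => ((hA.1.eigenvalues i ^ r : ℝ) : ℂ))).2
    (fun i => by
      rw [Complex.zero_le_real]
      exact Real.rpow_nonneg (hA.eigenvalues_nonneg i) r)
  have h2 := this.mul_mul_conjTranspose_same (hA.1.eigenvectorUnitary : Matrix (Fin d) (Fin d) ℂ)
  simpa [Matrix.star_eq_conjTranspose] using h2

lemma mpow_mul_mpow_core {A : Matrix (Fin d) (Fin d) ℂ} (hA : A.IsHermitian) {r s : ℝ}
    (h : ∀ i, (hA.eigenvalues i) ^ r * (hA.eigenvalues i) ^ s = (hA.eigenvalues i) ^ (r + s)) :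
    mpow A r * mpow A s = mpow A (r + s) := by
  rw [mpow_eq hA r, mpow_eq hA s, mpow_eq hA (r + s)]
  have hU : star (hA.eigenvectorUnitary : Matrix (Fin d) (Fin d) ℂ) *
      (hA.eigenvectorUnitary : Matrix (Fin d) (Fin d) ℂ) = 1 := by
    exact Matrix.UnitaryGroup.star_mul_self _
  calc _ = (hA.eigenvectorUnitary : Matrix (Fin d) (Fin d) ℂ) *
      (Matrix.diagonal (fun i => ((hA.eigenvalues i ^ r : ℝ) : ℂ)) *
       Matrix.diagonal (fun i => ((hA.eigenvalues i ^ s : ℝ) : ℂ))) *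
      star (hA.eigenvectorUnitary : Matrix (Fin d) (Fin d) ℂ) := by
        simp only [mul_assoc]
        rw [← mul_assoc (star _) _, hU, one_mul]
    _ = _ := by
        rw [Matrix.diagonal_mul_diagonal]
        have hfun : (fun i => ((hA.eigenvalues i ^ r : ℝ) : ℂ) * ((hA.eigenvalues i ^ s : ℝ) : ℂ))
            = fun i => ((hA.eigenvalues i ^ (r + s) : ℝ) : ℂ) := by
          funext i; rw [← Complex.ofReal_mul, h i]
        rw [hfun]

lemma mpow_zero {A : Matrix (Fin d) (Fin d) ℂ} (hA : A.IsHermitian) : mpow A 0 = 1 := by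
  rw [mpow_eq hA]
  simp only [Real.rpow_zero, Complex.ofReal_one, Matrix.diagonal_one, mul_one]
  exact (Matrix.mem_unitaryGroup_iff).mp (hA.eigenvectorUnitary).2

lemma mpow_one {A : Matrix (Fin d) (Fin d) ℂ} (hA : A.IsHermitian) : mpow A 1 = A := by
  rw [mpow_eq hA]
  simp only [Real.rpow_one]
  exact (hA.spectral_theorem).symm

lemma mpow_half_mul_half {A : Matrix (Fin d) (Fin d) ℂ} (hA : A.PosSemidef) :
    mpow A (1/2) * mpow A (1/2) = A := by
  have := mpow_mul_mpow_core hA.1 (r := 1/2) (s := 1/2) (fun i => by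
    rw [← Real.rpow_add' (hA.eigenvalues_nonneg i) (by norm_num)])
  norm_num at this ⊢
  rw [this, mpow_one hA.1]

lemma mpow_half_mul_neg_half {A : Matrix (Fin d) (Fin d) ℂ} (hA : A.PosDef) :
    mpow A (1/2) * mpow A (-(1/2)) = 1 := by
  have := mpow_mul_mpow_core hA.1 (r := 1/2) (s := -(1/2)) (fun i => by
    rw [← Real.rpow_add (hA.eigenvalues_pos i)])
  norm_num at this ⊢
  rw [this]
  exact mpow_zero hA.1

lemma mpow_neg_half_mul_half {A : Matrix (Fin d) (Fin d) ℂ} (hA : A.PosDef) :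
    mpow A (-(1/2)) * mpow A (1/2) = 1 := by
  have := mpow_mul_mpow_core hA.1 (r := -(1/2)) (s := 1/2) (fun i => by
    rw [← Real.rpow_add (hA.eigenvalues_pos i)])
  norm_num at this ⊢
  rw [this]
  exact mpow_zero hA.1

lemma trace_re_nonneg {A : Matrix (Fin d) (Fin d) ℂ} (hA : A.PosSemidef) :
    0 ≤ A.trace.re := by
  rw [Matrix.trace, Complex.re_sum]
  apply Finset.sum_nonneg
  intro i _
  have := hA.re_dotProduct_nonneg (Pi.single i 1)
  simpa [dotProduct, Matrix.mulVec, Pi.single_apply, Matrix.diag] using this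

lemma re_trace_le_trace_mpow_sqrt (M : Matrix (Fin d) (Fin d) ℂ) :
    M.trace.re ≤ ((mpow (Mᴴ * M) (1/2)).trace).re := by
  have hpsd : (Mᴴ * M).PosSemidef := Matrix.posSemidef_conjTranspose_mul_self M
  have hH : (Mᴴ * M).IsHermitian := hpsd.1
  set V : Matrix (Fin d) (Fin d) ℂ := (hH.eigenvectorUnitary : Matrix (Fin d) (Fin d) ℂ) with hV
  set N : Matrix (Fin d) (Fin d) ℂ := M * V with hN
  have hVsV : star V * V = 1 := Matrix.UnitaryGroup.star_mul_self _
  have hVVs : V * star V = 1 := (Matrix.mem_unitaryGroup_iff).mp hH.eigenvectorUnitary.2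
  have hRHS : (mpow (Mᴴ * M) (1/2)).trace = ∑ i, ((hH.eigenvalues i ^ ((1:ℝ)/2) : ℝ) : ℂ) := by
    rw [mpow_eq hH, ← hV, Matrix.trace_mul_cycle, hVsV, Matrix.one_mul,
      Matrix.trace_diagonal]
  have hLHS : M.trace = (star V * N).trace := by
    rw [hN, ← Matrix.mul_assoc, Matrix.trace_mul_cycle, hVVs, Matrix.one_mul]
  have hNsN : star N * N = Matrix.diagonal (RCLike.ofReal ∘ hH.eigenvalues) := by
    rw [hN, StarMul.star_mul, Matrix.star_eq_conjTranspose M]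
    calc star V * Mᴴ * (M * V) = star V * (Mᴴ * M) * V := by
          simp only [Matrix.mul_assoc]
      _ = _ := by rw [hV]; have h0 := hH.conjStarAlgAut_star_eigenvectorUnitary; simpa only [Unitary.conjStarAlgAut_apply, Unitary.coe_star, star_star] using h0
  -- per-column norms
  have key : ∀ i, ((star V * N) i i).re ≤ hH.eigenvalues i ^ ((1:ℝ)/2) := by
    intro i
    set x : EuclideanSpace ℂ (Fin d) := WithLp.toLp 2 (fun k => V k i) with hx
    set y : EuclideanSpace ℂ (Fin d) := WithLp.toLp 2 (fun k => N k i) with hy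
    have hinner : (inner ℂ x y : ℂ) = (star V * N) i i := by
      rw [Matrix.mul_apply]
      simp [hx, hy, PiLp.inner_apply, RCLike.inner_apply, Matrix.star_apply,
        Matrix.star_eq_conjTranspose, Matrix.conjTranspose_apply, mul_comm]
    have hxnorm : ‖x‖ = 1 := by
      have h1 : (star V * V) i i = 1 := by rw [hVsV]; simp [Matrix.one_apply]
      rw [Matrix.mul_apply] at h1
      have h2 : (∑ k, (‖V k i‖:ℂ) ^ 2) = 1 := by
        rw [← h1]
        refine Finset.sum_congr rfl fun k _ => ?_
        exact (RCLike.conj_mul (V k i)).symm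
      have h3 : ∑ k, ‖V k i‖ ^ 2 = 1 := by exact_mod_cast h2
      rw [EuclideanSpace.norm_eq]
      simp only [hx]
      rw [h3, Real.sqrt_one]
    have hynorm : ‖y‖ = hH.eigenvalues i ^ ((1:ℝ)/2) := by
      have h1 : (star N * N) i i = ((hH.eigenvalues i : ℝ) : ℂ) := by
        rw [hNsN]; simp [Matrix.diagonal_apply_eq]
      rw [Matrix.mul_apply] at h1
      have h2 : (∑ k, (‖N k i‖:ℂ) ^ 2) = ((hH.eigenvalues i : ℝ) : ℂ) := by
        rw [← h1]
        refine Finset.sum_congr rfl fun k _ => ?_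
        exact (RCLike.conj_mul (N k i)).symm
      have h3 : ∑ k, ‖N k i‖ ^ 2 = hH.eigenvalues i := by exact_mod_cast h2
      rw [EuclideanSpace.norm_eq]
      simp only [hy]
      rw [h3, Real.sqrt_eq_rpow]
    calc ((star V * N) i i).re = (inner ℂ x y : ℂ).re := by rw [hinner]
      _ ≤ ‖(inner ℂ x y : ℂ)‖ := Complex.re_le_norm _
      _ ≤ ‖x‖ * ‖y‖ := norm_inner_le_norm x y
      _ = hH.eigenvalues i ^ ((1:ℝ)/2) := by rw [hxnorm, hynorm, one_mul]
  rw [hLHS, hRHS, Matrix.trace, Complex.re_sum, Complex.re_sum]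
  apply Finset.sum_le_sum
  intro i _
  simpa using key i
theorem fhalf_sq_le_fidelity {d : ℕ} (ρ σ : Matrix (Fin d) (Fin d) ℂ)
    (hρ : ρ.PosDef) (hρtr : ρ.trace = 1) (hσ : σ.PosSemidef) (hσtr : σ.trace = 1) :
    ((mpow ρ (1/2) * mpow (mpow ρ (-(1/2)) * σ * mpow ρ (-(1/2))) (1/2) *
        mpow ρ (1/2)).trace.re) ^ 2 ≤
      ((mpow (mpow ρ (1/2) * σ * mpow ρ (1/2)) (1/2)).trace.re) ^ 2 := by
  set S := mpow ρ (1/2) with hSdef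
  set Si := mpow ρ (-(1/2)) with hSidef
  have hρpsd := hρ.posSemidef
  have hSpsd : S.PosSemidef := mpow_posSemidef hρpsd _
  have hSipsd : Si.PosSemidef := mpow_posSemidef hρpsd _
  have hSSi : S * Si = 1 := mpow_half_mul_neg_half hρ
  have hSiS : Si * S = 1 := mpow_neg_half_mul_half hρ
  set B := Si * σ * Si with hBdef
  have hB : B.PosSemidef := by
    have := hσ.conjTranspose_mul_mul_same Si
    rwa [hSipsd.1.eq] at this
  set C := mpow B (1/2) with hCdef
  have hC : C.PosSemidef := mpow_posSemidef hB _
  have hCC : C * C = B := mpow_half_mul_half hB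
  set M := C * S * S with hMdef
  have hMH : Mᴴ = S * S * C := by
    rw [hMdef]
    simp only [Matrix.conjTranspose_mul, hC.1.eq, hSpsd.1.eq, Matrix.mul_assoc]
  have k1 : ∀ X : Matrix (Fin d) (Fin d) ℂ, S * (Si * X) = X := fun X => by
    rw [← Matrix.mul_assoc, hSSi, Matrix.one_mul]
  have k2 : ∀ X : Matrix (Fin d) (Fin d) ℂ, Si * (S * X) = X := fun X => by
    rw [← Matrix.mul_assoc, hSiS, Matrix.one_mul]
  have kC : ∀ X : Matrix (Fin d) (Fin d) ℂ, C * (C * X) = B * X := fun X => by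
    rw [← Matrix.mul_assoc, hCC]
  have hMM : Mᴴ * M = S * σ * S := by
    rw [hMH, hMdef]
    simp only [Matrix.mul_assoc]
    rw [kC]
    rw [hBdef]
    simp only [Matrix.mul_assoc]
    rw [k2, k1]
  have htr : M.trace = (S * C * S).trace := Matrix.trace_mul_cycle C S S
  have hLpos : 0 ≤ (S * C * S).trace.re := by
    apply trace_re_nonneg
    have := hC.mul_mul_conjTranspose_same S
    rwa [hSpsd.1.eq] at this
  have hineq : (S * C * S).trace.re ≤ (mpow (S * σ * S) (1/2)).trace.re := by
    have h := re_trace_le_trace_mpow_sqrt M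
    rw [hMM] at h
    rw [← htr]
    exact h
  exact pow_le_pow_left₀ hLpos hineq 2
end
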